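/- arXiv:2004.03038 — 2 statements merged into one kernel-verified Lean document; each statement's English description precedes it below -/
import Mathlib

section
/- With θ(D_i) = arcsin(√3·D_i/(2D)) − π/3 for D_i ∈ (D, 2D/√3], the exact feasible area A(D_i) = 3D(D_i·sin θ(D_i) − D·θ(D_i)) satisfies lim_{D_i → D⁺} A(D_i)/(D_i − D)² = 3√3. -/
open Filter Topology Real

/-!
Write `θ` for the angle `arcsin (√3 x / (2D)) - π / 3` and `x = Dᵢ`. Since
`A = 3D (x - D) sin θ - 3D² (θ - sin θ)`, the quotient `A / (x - D)²` splits as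
`3D · sin θ / (x - D) - 3D² · (θ - sin θ) / (x - D)²`. As `θ(D) = 0` and `θ'(D) = √3 / D`,
the first term tends to `3D · √3 / D = 3√3`, and the second to `0`, because
`|θ - sin θ| ≤ |θ|³ / 6` while `θ / (x - D)` stays bounded.
-/

theorem Real.tendsto_sub_sin_div_sq_nhds_zero :
    Tendsto (fun t : ℝ => (t - sin t) / t ^ 2) (𝓝 0) (𝓝 0) := by
  have h : Tendsto (fun t : ℝ => |t| / 6) (𝓝 0) (𝓝 0) := by
    simpa using (continuous_abs.div_const 6).tendsto (0 : ℝ)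
  refine squeeze_zero_norm (fun t => ?_) h
  rcases eq_or_ne t 0 with rfl | ht
  · simp
  rw [norm_div, norm_pow, Real.norm_eq_abs, Real.norm_eq_abs, div_le_iff₀ (by positivity)]
  calc |t - sin t| ≤ |t| ^ 3 / 6 := abs_sub_sin_le t
    _ = |t| / 6 * |t| ^ 2 := by ring

theorem Real.arcsin_sqrt_three_div_two : arcsin (√3 / 2) = π / 3 := by
  rw [← sin_pi_div_three]
  exact arcsin_sin (by linarith [pi_pos]) (by linarith [pi_pos])

theorem Real.hasDerivAt_arcsin_sqrt_three_div_two : HasDerivAt arcsin 2 (√3 / 2) := by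
  have h3 : √3 ^ 2 = 3 := sq_sqrt (by norm_num)
  have hne : √3 / 2 ≠ 1 := fun h => by nlinarith
  convert hasDerivAt_arcsin (by linarith [sqrt_nonneg 3] : (-1 : ℝ) < √3 / 2).ne' hne using 1
  rw [div_pow, h3, show (1 : ℝ) - 3 / 2 ^ 2 = (1 / 2) ^ 2 by norm_num, sqrt_sq (by norm_num)]
  norm_num

namespace HasDerivAt

variable {f : ℝ → ℝ} {f' a : ℝ}

theorem tendsto_div_sub_nhdsNE (hf : HasDerivAt f f' a) (ha : f a = 0) :
    Tendsto (fun x => f x / (x - a)) (𝓝[≠] a) (𝓝 f') := by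
  simpa [slope_fun_def_field, ha] using hasDerivAt_iff_tendsto_slope.mp hf

theorem tendsto_sin_div_sub_nhdsNE (hf : HasDerivAt f f' a) (ha : f a = 0) :
    Tendsto (fun x => Real.sin (f x) / (x - a)) (𝓝[≠] a) (𝓝 f') := by
  have hsin := (hasDerivAt_sin (f a)).comp a hf
  rw [ha, cos_zero, one_mul] at hsin
  exact hsin.tendsto_div_sub_nhdsNE (by simp [ha])

theorem tendsto_sub_sin_div_sq_nhdsNE (hf : HasDerivAt f f' a) (ha : f a = 0) :
    Tendsto (fun x => (f x - Real.sin (f x)) / (x - a) ^ 2) (𝓝[≠] a) (𝓝 0) := by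
  have hf0 : Tendsto f (𝓝[≠] a) (𝓝 0) :=
    ha ▸ hf.continuousAt.tendsto.mono_left nhdsWithin_le_nhds
  have h := (tendsto_sub_sin_div_sq_nhds_zero.comp hf0).mul ((hf.tendsto_div_sub_nhdsNE ha).pow 2)
  rw [zero_mul] at h
  refine h.congr fun x => ?_
  -- `(θ - sin θ) / (x - a)² = ((θ - sin θ) / θ²) · (θ / (x - a))²`, trivially also where `θ = 0`
  rcases eq_or_ne (f x) 0 with hx | hx
  · simp [hx]
  · rw [Function.comp_apply, div_pow, div_mul_div_comm, mul_comm (f x ^ 2),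
      mul_div_mul_right _ _ (pow_ne_zero 2 hx)]

end HasDerivAt

/-- The angle `θ(Dᵢ) = arcsinExcess D Dᵢ` of the area formula. -/
noncomputable def arcsinExcess (D x : ℝ) : ℝ := arcsin (√3 * x / (2 * D)) - π / 3

theorem arcsinExcess_self {D : ℝ} (hD : D ≠ 0) : arcsinExcess D D = 0 := by
  rw [arcsinExcess, mul_div_mul_comm, div_self hD, mul_one, arcsin_sqrt_three_div_two, sub_self]

theorem hasDerivAt_arcsinExcess {D : ℝ} (hD : D ≠ 0) : HasDerivAt (arcsinExcess D) (√3 / D) D := by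
  have hlin : HasDerivAt (fun x : ℝ => √3 * x / (2 * D)) (√3 / (2 * D)) D := by
    simpa using ((hasDerivAt_id D).const_mul √3).div_const (2 * D)
  have harc : HasDerivAt arcsin 2 (√3 * D / (2 * D)) := by
    rw [mul_div_mul_comm, div_self hD, mul_one]
    exact hasDerivAt_arcsin_sqrt_three_div_two
  rw [show √3 / D = 2 * (√3 / (2 * D)) by ring]
  exact (harc.comp D hlin).sub_const (π / 3)

theorem area_asymptotic (D : ℝ) (hD : 0 < D) :
    Tendsto (fun Di =>
        (3 * D * (Di * Real.sin (Real.arcsin (Real.sqrt 3 * Di / (2 * D)) - Real.pi / 3)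
            - D * (Real.arcsin (Real.sqrt 3 * Di / (2 * D)) - Real.pi / 3)))
          / (Di - D) ^ 2)
      (𝓝[>] D) (𝓝 (3 * Real.sqrt 3)) := by
  have hθ := hasDerivAt_arcsinExcess hD.ne'
  have hθD := arcsinExcess_self hD.ne'
  have hsplit := ((hθ.tendsto_sin_div_sub_nhdsNE hθD).const_mul (3 * D)).sub
    ((hθ.tendsto_sub_sin_div_sq_nhdsNE hθD).const_mul (3 * D ^ 2))
  rw [show 3 * D * (√3 / D) - 3 * D ^ 2 * 0 = 3 * √3 by field_simp; ring] at hsplit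
  refine (hsplit.mono_left (nhdsGT_le_nhdsNE D)).congr' ?_
  filter_upwards [self_mem_nhdsWithin] with x (hx : D < x)
  have hxD : x - D ≠ 0 := sub_ne_zero.mpr hx.ne'
  simp only [arcsinExcess]
  field_simp
  ring
end

section
/- Restricting facilities in the BLP to binary assignment variables y_{ij} ∈ {0,1} yields the same optimal objective value as the mixed relaxation with y_{ij} ∈ [0,1]: the optimal values of the two programs are equal. -/
open Finset

lemma exists_pos_le_sum_mul {κ : Type*} [Fintype κ] (c y : κ → ℝ) (hy0 : ∀ j, 0 ≤ y j)
    (hy1 : ∑ j, y j = 1) : ∃ j, 0 < y j ∧ c j ≤ ∑ j, c j * y j := by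
  obtain ⟨j₀, -, hj₀⟩ : ∃ j ∈ univ, (0 : κ → ℝ) j < y j :=
    exists_lt_of_sum_lt (by simp [hy1])
  obtain ⟨g, hg, hmin⟩ := exists_min_image (univ.filter fun j => 0 < y j) c
    ⟨j₀, mem_filter.mpr ⟨mem_univ j₀, hj₀⟩⟩
  refine ⟨g, (mem_filter.mp hg).2, ?_⟩
  calc c g = ∑ j, c g * y j := by rw [← mul_sum, hy1, mul_one]
    _ ≤ ∑ j, c j * y j := sum_le_sum fun j _ => by
        rcases (hy0 j).eq_or_lt with hj | hj
        · simp [← hj]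
        · exact mul_le_mul_of_nonneg_right (hmin j (mem_filter.mpr ⟨mem_univ j, hj⟩)) hj.le

/-- Assign each demand point to the cheapest facility among those it is fractionally served by;
such a facility is open, since `0 < y i j ≤ x j`. -/
lemma exists_binary_assignment_le {ι κ : Type*} [Fintype ι] [Fintype κ] (c : ι → κ → ℝ)
    (x : κ → ℝ) (y : ι → κ → ℝ) (hx : ∀ j, x j = 0 ∨ x j = 1) (hy0 : ∀ i j, 0 ≤ y i j)
    (hyx : ∀ i j, y i j ≤ x j) (hy1 : ∀ i, ∑ j, y i j = 1) :
    ∃ y' : ι → κ → ℝ, (∀ i j, y' i j = 0 ∨ y' i j = 1) ∧ (∀ i j, y' i j ≤ x j) ∧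
      (∀ i, ∑ j, y' i j = 1) ∧ ∑ i, ∑ j, c i j * y' i j ≤ ∑ i, ∑ j, c i j * y i j := by
  classical
  choose g hg_pos hg_le using fun i => exists_pos_le_sum_mul (c i) (y i) (hy0 i) (hy1 i)
  have hx_open : ∀ i, x (g i) = 1 :=
    fun i => (hx (g i)).resolve_left ((hg_pos i).trans_le (hyx i (g i))).ne'
  refine ⟨fun i j => if j = g i then 1 else 0, fun i j => ?_, fun i j => ?_, fun i => by simp,
    sum_le_sum fun i _ => by simpa using hg_le i⟩
  · dsimp only
    split_ifs <;> simp
  · dsimp only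
    split_ifs with h
    · rw [h, hx_open]
    · exact (hy0 i j).trans (hyx i j)

theorem MBLP_eq_BLP_general
    {ι κ : Type*} [Fintype ι] [Fintype κ]
    (w : ι → ℝ) (d : ι → κ → ℝ)
    (p : ℕ) :
    sInf {v : ℝ | ∃ x : κ → ℝ, ∃ y : ι → κ → ℝ,
        (∀ j, x j = 0 ∨ x j = 1) ∧ (∑ j, x j = p) ∧
        (∀ i j, 0 ≤ y i j) ∧ (∀ i j, y i j ≤ x j) ∧
        (∀ i, ∑ j, y i j = 1) ∧
        v = ∑ i, ∑ j, w i * d i j * y i j}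
      = sInf {v : ℝ | ∃ x : κ → ℝ, ∃ y : ι → κ → ℝ,
        (∀ j, x j = 0 ∨ x j = 1) ∧ (∑ j, x j = p) ∧
        (∀ i j, y i j = 0 ∨ y i j = 1) ∧ (∀ i j, y i j ≤ x j) ∧
        (∀ i, ∑ j, y i j = 1) ∧
        v = ∑ i, ∑ j, w i * d i j * y i j} := by
  refine csInf_eq_csInf_of_forall_exists_le ?_ ?_
  · rintro _ ⟨x, y, hx, hxp, hy0, hyx, hy1, rfl⟩
    obtain ⟨y', hy'01, hy'x, hy'1, hle⟩ :=
      exists_binary_assignment_le (fun i j => w i * d i j) x y hx hy0 hyx hy1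
    exact ⟨_, ⟨x, y', hx, hxp, hy'01, hy'x, hy'1, rfl⟩, hle⟩
  · rintro _ ⟨x, y, hx, hxp, hy01, hyx, hy1, rfl⟩
    refine ⟨_, ⟨x, y, hx, hxp, fun i j => ?_, hyx, hy1, rfl⟩, le_rfl⟩
    rcases hy01 i j with h | h <;> simp [h]

theorem MBLP_eq_BLP
    {ι κ : Type*} [Fintype ι] [Fintype κ]
    (w : ι → ℝ) (d : ι → κ → ℝ) (hw : ∀ i, 0 ≤ w i) (hd : ∀ i j, 0 ≤ d i j)
    (p : ℕ) (hp1 : 1 ≤ p) (hp2 : p ≤ Fintype.card κ) :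
    sInf {v : ℝ | ∃ x : κ → ℝ, ∃ y : ι → κ → ℝ,
        (∀ j, x j = 0 ∨ x j = 1) ∧ (∑ j, x j = p) ∧
        (∀ i j, 0 ≤ y i j) ∧ (∀ i j, y i j ≤ x j) ∧
        (∀ i, ∑ j, y i j = 1) ∧
        v = ∑ i, ∑ j, w i * d i j * y i j}
      = sInf {v : ℝ | ∃ x : κ → ℝ, ∃ y : ι → κ → ℝ,
        (∀ j, x j = 0 ∨ x j = 1) ∧ (∑ j, x j = p) ∧
        (∀ i j, y i j = 0 ∨ y i j = 1) ∧ (∀ i j, y i j ≤ x j) ∧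
        (∀ i, ∑ j, y i j = 1) ∧
        v = ∑ i, ∑ j, w i * d i j * y i j} :=
  MBLP_eq_BLP_general w d p
end
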